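/- Let V be a finite-dimensional Hermitian space and φ ∈ V with σ(φ) = φ⊗φ* − (|φ|²/2)·I on a 2-dimensional V. For any solution of the pointwise identity coming from the maximum principle argument: if a smooth function u = |φ|² on a compact Riemannian manifold satisfies ½Δu + |∇^Aφ|² + u²/4 + (k_g/4)u = 0 pointwise, then at a maximum point x₀ of u one has u(x₀)(u(x₀) + k_g(x₀)) ≤ 0; hence sup|φ|² ≤ max(0, −min_{x}k_g(x)). -/
import Mathlib


/-- The maximum-principle estimate `sup |φ|² ≤ max(0, −min k_g)`.

Here `u = |φ|²` is continuous (smooth) on the compact space `X`, `lapU = Δu` is the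
geometer's (nonnegative) Laplacian of `u`, `covNormSq = |∇^A φ|² ≥ 0`, and `kg` is the
scalar curvature.  The pointwise identity `½ Δu + |∇^A φ|² + u²/4 + (k_g/4) u = 0` holds,
and at an interior maximum `Δu(x₀) ≥ 0`.  Then at any maximum point `x₀` of `u` one has
`u(x₀)(u(x₀) + k_g(x₀)) ≤ 0`, and hence `sup |φ|² ≤ max(0, −min_x k_g(x))`. -/
theorem max_principle_estimate {X : Type*} [TopologicalSpace X] [CompactSpace X] [Nonempty X]
    (u lapU covNormSq kg : X → ℝ)
    (hu : Continuous u) (hkg : Continuous kg)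
    (hu_nonneg : ∀ x, 0 ≤ u x)
    (hcov_nonneg : ∀ x, 0 ≤ covNormSq x)
    (heq : ∀ x, (1 / 2) * lapU x + covNormSq x + (u x) ^ 2 / 4 + kg x * u x / 4 = 0)
    (hlap_max : ∀ x₀ : X, (∀ x, u x ≤ u x₀) → 0 ≤ lapU x₀) :
    (∀ x₀ : X, (∀ x, u x ≤ u x₀) → u x₀ * (u x₀ + kg x₀) ≤ 0) ∧
    (∀ x, u x ≤ max 0 (-(⨅ y, kg y))) := by
  have key : ∀ x₀ : X, (∀ x, u x ≤ u x₀) → u x₀ * (u x₀ + kg x₀) ≤ 0 := by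
    intro x₀ hmax
    have h1 := heq x₀
    have h2 := hlap_max x₀ hmax
    have h3 := hcov_nonneg x₀
    nlinarith [sq_nonneg (u x₀)]
  refine ⟨key, ?_⟩
  obtain ⟨x₀, hx₀⟩ := isCompact_univ.exists_isMaxOn Set.univ_nonempty hu.continuousOn
  have hmax : ∀ x, u x ≤ u x₀ := fun x => hx₀.2 (Set.mem_univ x)
  intro x
  refine le_trans (hmax x) ?_
  rcases eq_or_lt_of_le (hu_nonneg x₀) with h0 | hpos
  · rw [← h0]; exact le_max_left _ _
  · have h := key x₀ hmax
    have huk : u x₀ + kg x₀ ≤ 0 := by nlinarith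
    have hbdd : BddBelow (Set.range kg) :=
      (isCompact_range hkg).bddBelow
    have hinf : (⨅ y, kg y) ≤ kg x₀ := ciInf_le hbdd x₀
    calc u x₀ ≤ -kg x₀ := by linarith
      _ ≤ -(⨅ y, kg y) := by linarith
      _ ≤ max 0 (-(⨅ y, kg y)) := le_max_right _ _
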